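/- Let q ∈ ℂ with 0 < |q| < 1, let L ≥ 1 and k ∈ {1,…,L}. Let w_1,…,w_L ∈ ℂ \ {0} with w_k = 1 and w_d ∉ { q^m : m ∈ ℤ } for every d ≠ k, and let p_1,…,p_L ∈ ℂ \ {0} with p_d w_d ∉ { q^{−j} : j ∈ ℕ } for every d. Then for every ζ ∈ ℂ with |ζ| < 1 both series below converge absolutely and [ (q/p_k; q)_∞ / (q; q)_∞ ] · ∏_{d≠k} (q/(p_d w_d); q)_∞ / (1/w_d; q)_∞ · ∑_{m=0}^∞ ζ^m ∏_{d=1}^L (p_d w_d; q)_m / (q w_d; q)_m = [ Θ_q(p_k) / (q; q)_∞ ] · ∏_{d≠k} Θ_q(p_d w_d) / Θ_q(1/w_d) · (q; q)_∞^{−1} ∑_{m=0}^∞ ζ^m ∏_{d=1}^L (q^{1+m} w_d; q)_∞ / (q^m p_d w_d; q)_∞. -/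

import Mathlib

/-!
Since `(a; q)_m = (a; q)_∞ / (q^m a; q)_∞`, the `m`-th term of the vertex function equals the
`m`-th term of the half-index times the constant `∏_d (p_d w_d; q)_∞ / (q w_d; q)_∞`, which is
nonzero by the genericity assumptions. The two series thus converge together (the vertex terms
are bounded, being convergent, times `ζ^m`), and the identity reduces to comparing prefactors:
using `w_k = 1`, the constant combines with them into the theta functions
`Θ_q(x) = (x; q)_∞ (q/x; q)_∞` and `Θ_q(1/w) = (1/w; q)_∞ (q w; q)_∞`.
-/

/-- The infinite q-Pochhammer symbol `(x; q)_∞ = ∏_{k=0}^∞ (1 - q^k x)`. -/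
noncomputable def qPochInf (q x : ℂ) : ℂ := ∏' k : ℕ, (1 - q ^ k * x)

/-- The finite q-Pochhammer symbol `(x; q)_n = ∏_{k=0}^{n-1} (1 - q^k x)`. -/
noncomputable def qPochFin (q x : ℂ) (n : ℕ) : ℂ := ∏ k ∈ Finset.range n, (1 - q ^ k * x)

/-- The theta function `Θ_q(x) = (x; q)_∞ (q/x; q)_∞`. -/
noncomputable def thetaQ (q x : ℂ) : ℂ := qPochInf q x * qPochInf q (q / x)

open Filter Finset Topology

lemma one_sub_pow_mul_ne_zero {K : Type*} [DivisionRing K] {q x : K} {j : ℕ}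
    (h : x ≠ q ^ (-(j : ℤ))) : 1 - q ^ j * x ≠ 0 := by
  rw [sub_ne_zero, ne_comm]
  contrapose! h
  rw [zpow_neg, zpow_natCast]
  exact eq_inv_of_mul_eq_one_right h

lemma summable_norm_pow_mul_of_tendsto {R : Type*} [NormedDivisionRing R] {ζ l : R}
    (hζ : ‖ζ‖ < 1) {c : ℕ → R} (hc : Tendsto c atTop (𝓝 l)) :
    Summable fun m => ‖ζ ^ m * c m‖ := by
  obtain ⟨B, hB⟩ := hc.norm.bddAbove_range
  refine .of_nonneg_of_le (fun _ => norm_nonneg _) (fun m => ?_)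
    ((summable_geometric_of_lt_one (norm_nonneg ζ) hζ).mul_right B)
  rw [norm_mul, norm_pow]
  exact mul_le_mul_of_nonneg_left (hB (Set.mem_range_self m)) (by positivity)

section QPochhammer

variable {q : ℂ}

lemma summable_norm_pow_mul (hq : ‖q‖ < 1) (x : ℂ) : Summable fun j : ℕ => ‖q ^ j * x‖ := by
  simpa only [norm_mul, norm_pow] using
    (summable_geometric_of_lt_one (norm_nonneg q) hq).mul_right ‖x‖

lemma multipliable_one_sub_pow_mul (hq : ‖q‖ < 1) (x : ℂ) :
    Multipliable fun j : ℕ => 1 - q ^ j * x := by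
  simpa only [sub_eq_add_neg] using
    multipliable_one_add_of_summable (by simpa only [norm_neg] using summable_norm_pow_mul hq x)

lemma qPochInf_ne_zero (hq : ‖q‖ < 1) {x : ℂ} (hx : ∀ j : ℕ, 1 - q ^ j * x ≠ 0) :
    qPochInf q x ≠ 0 := by
  simp only [qPochInf, sub_eq_add_neg] at hx ⊢
  exact tprod_one_add_ne_zero_of_summable hx
    (by simpa only [norm_neg] using summable_norm_pow_mul hq x)

lemma qPochInf_eq_qPochFin_mul (hq : ‖q‖ < 1) (x : ℂ) (m : ℕ) :
    qPochInf q x = qPochFin q x m * qPochInf q (q ^ m * x) := by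
  have shifted (i : ℕ) : 1 - q ^ i * (q ^ m * x) = 1 - q ^ (i + m) * x := by
    rw [pow_add, mul_assoc]
  have h := multipliable_one_sub_pow_mul hq (q ^ m * x)
  simp only [shifted] at h
  simp only [qPochInf, qPochFin, shifted]
  exact (Multipliable.prod_mul_tprod_nat_mul' (f := fun i => 1 - q ^ i * x) h).symm

lemma tendsto_qPochFin (hq : ‖q‖ < 1) (x : ℂ) :
    Tendsto (qPochFin q x) atTop (𝓝 (qPochInf q x)) :=
  (multipliable_one_sub_pow_mul hq x).hasProd.tendsto_prod_nat

lemma qPochFin_div_qPochFin (hq : ‖q‖ < 1) {a b : ℂ}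
    (ha : ∀ j : ℕ, 1 - q ^ j * a ≠ 0) (hb : ∀ j : ℕ, 1 - q ^ j * b ≠ 0) (m : ℕ) :
    qPochFin q a m / qPochFin q b m =
      qPochInf q a / qPochInf q b * (qPochInf q (q ^ m * b) / qPochInf q (q ^ m * a)) := by
  have shift {x : ℂ} (hx : ∀ j : ℕ, 1 - q ^ j * x ≠ 0) : qPochInf q (q ^ m * x) ≠ 0 :=
    qPochInf_ne_zero hq fun j => by rw [← mul_assoc, ← pow_add]; exact hx (j + m)
  have hb' : qPochFin q b m ≠ 0 := prod_ne_zero_iff.mpr fun j _ => hb j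
  have := shift ha
  have := shift hb
  rw [qPochInf_eq_qPochFin_mul hq a m, qPochInf_eq_qPochFin_mul hq b m]
  field_simp

lemma thetaQ_div_thetaQ_inv (x w : ℂ) :
    thetaQ q x / thetaQ q (1 / w) =
      qPochInf q x / qPochInf q (q * w) * (qPochInf q (q / x) / qPochInf q (1 / w)) := by
  rw [thetaQ, thetaQ, one_div, div_inv_eq_mul]
  ring

lemma prefactor_mul_prod_qPochInf_div {ι : Type*} [Fintype ι] [DecidableEq ι] {k : ι}
    {w : ι → ℂ} (hwk : w k = 1) (p : ι → ℂ) :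
    qPochInf q (q / p k) / qPochInf q q *
        (∏ d ∈ univ.erase k, qPochInf q (q / (p d * w d)) / qPochInf q (1 / w d)) *
        ∏ d, qPochInf q (p d * w d) / qPochInf q (q * w d) =
      thetaQ q (p k) / qPochInf q q *
        (∏ d ∈ univ.erase k, thetaQ q (p d * w d) / thetaQ q (1 / w d)) * (qPochInf q q)⁻¹ := by
  rw [← mul_prod_erase univ _ (mem_univ k), hwk, mul_one, mul_one,
    prod_congr rfl fun d _ => thetaQ_div_thetaQ_inv (p d * w d) (w d), prod_mul_distrib, thetaQ]
  ring

end QPochhammer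

theorem stmt7_general (q : ℂ) (hq1 : ‖q‖ < 1) (L : ℕ) (k : Fin L)
    (w p : Fin L → ℂ) (hwk : w k = 1)
    (hwgen : ∀ d, d ≠ k → ∀ m : ℤ, w d ≠ q ^ m)
    (hpw : ∀ d, ∀ j : ℕ, p d * w d ≠ q ^ (-(j : ℤ)))
    (ζ : ℂ) (hζ : ‖ζ‖ < 1) :
    Summable (fun m : ℕ =>
      ‖ζ ^ m * ∏ d, qPochFin q (p d * w d) m / qPochFin q (q * w d) m‖) ∧
    Summable (fun m : ℕ =>
      ‖ζ ^ m * ∏ d, qPochInf q (q ^ (1 + m) * w d) / qPochInf q (q ^ m * (p d * w d))‖) ∧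
    (qPochInf q (q / p k) / qPochInf q q) *
        (∏ d ∈ Finset.univ.erase k, qPochInf q (q / (p d * w d)) / qPochInf q (1 / w d)) *
        (∑' m : ℕ, ζ ^ m * ∏ d, qPochFin q (p d * w d) m / qPochFin q (q * w d) m) =
      (thetaQ q (p k) / qPochInf q q) *
        (∏ d ∈ Finset.univ.erase k, thetaQ q (p d * w d) / thetaQ q (1 / w d)) *
        ((qPochInf q q)⁻¹ *
          (∑' m : ℕ, ζ ^ m *
            ∏ d, qPochInf q (q ^ (1 + m) * w d) / qPochInf q (q ^ m * (p d * w d)))) := by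
  have ha (d) (j : ℕ) : 1 - q ^ j * (p d * w d) ≠ 0 := one_sub_pow_mul_ne_zero (hpw d j)
  have hb (d) (j : ℕ) : 1 - q ^ j * (q * w d) ≠ 0 := by
    rw [← mul_assoc, ← pow_succ]
    by_cases hd : d = k
    · rw [hd, hwk, mul_one, sub_ne_zero, ne_comm]
      refine ne_of_apply_ne norm fun h => ?_
      rw [norm_pow, norm_one] at h
      exact (pow_lt_one₀ (norm_nonneg q) hq1 j.succ_ne_zero).ne h
    · exact one_sub_pow_mul_ne_zero (hwgen d hd _)
  set C := ∏ d, qPochInf q (p d * w d) / qPochInf q (q * w d)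
  have hC : C ≠ 0 := prod_ne_zero_iff.mpr fun d _ =>
    div_ne_zero (qPochInf_ne_zero hq1 (ha d)) (qPochInf_ne_zero hq1 (hb d))
  have hterm (m : ℕ) : ζ ^ m * ∏ d, qPochFin q (p d * w d) m / qPochFin q (q * w d) m =
      C * (ζ ^ m * ∏ d, qPochInf q (q ^ (1 + m) * w d) / qPochInf q (q ^ m * (p d * w d))) := by
    have factor (d) : qPochFin q (p d * w d) m / qPochFin q (q * w d) m =
        qPochInf q (p d * w d) / qPochInf q (q * w d) *
          (qPochInf q (q ^ (1 + m) * w d) / qPochInf q (q ^ m * (p d * w d))) := by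
      rw [qPochFin_div_qPochFin hq1 (ha d) (hb d), ← mul_assoc, ← pow_succ, add_comm 1 m]
    rw [prod_congr rfl fun d _ => factor d, prod_mul_distrib, mul_left_comm]
  have hS1 : Summable fun m : ℕ =>
      ‖ζ ^ m * ∏ d, qPochFin q (p d * w d) m / qPochFin q (q * w d) m‖ :=
    summable_norm_pow_mul_of_tendsto hζ <| tendsto_finsetProd univ fun d _ =>
      (tendsto_qPochFin hq1 _).div (tendsto_qPochFin hq1 _) (qPochInf_ne_zero hq1 (hb d))
  refine ⟨hS1, ?_, ?_⟩
  · refine (hS1.mul_left ‖C⁻¹‖).congr fun m => ?_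
    rw [← norm_mul, hterm, inv_mul_cancel_left₀ hC]
  · rw [tsum_congr hterm, tsum_mul_left, ← mul_assoc, prefactor_mul_prod_qPochInf_div hwk,
      mul_assoc]

/-- Equality of the `W_{q,t}(A₁)` vertex-function component with the exceptional-Dirichlet
half-index (sum over boundary monopole fluxes). -/
theorem stmt7 (q : ℂ) (hq0 : 0 < ‖q‖) (hq1 : ‖q‖ < 1) (L : ℕ) (hL : 1 ≤ L) (k : Fin L)
    (w p : Fin L → ℂ) (hw0 : ∀ d, w d ≠ 0) (hwk : w k = 1)
    (hwgen : ∀ d, d ≠ k → ∀ m : ℤ, w d ≠ q ^ m)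
    (hp0 : ∀ d, p d ≠ 0) (hpw : ∀ d, ∀ j : ℕ, p d * w d ≠ q ^ (-(j : ℤ)))
    (ζ : ℂ) (hζ : ‖ζ‖ < 1) :
    Summable (fun m : ℕ =>
      ‖ζ ^ m * ∏ d, qPochFin q (p d * w d) m / qPochFin q (q * w d) m‖) ∧
    Summable (fun m : ℕ =>
      ‖ζ ^ m * ∏ d, qPochInf q (q ^ (1 + m) * w d) / qPochInf q (q ^ m * (p d * w d))‖) ∧
    (qPochInf q (q / p k) / qPochInf q q) *
        (∏ d ∈ Finset.univ.erase k, qPochInf q (q / (p d * w d)) / qPochInf q (1 / w d)) *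
        (∑' m : ℕ, ζ ^ m * ∏ d, qPochFin q (p d * w d) m / qPochFin q (q * w d) m) =
      (thetaQ q (p k) / qPochInf q q) *
        (∏ d ∈ Finset.univ.erase k, thetaQ q (p d * w d) / thetaQ q (1 / w d)) *
        ((qPochInf q q)⁻¹ *
          (∑' m : ℕ, ζ ^ m *
            ∏ d, qPochInf q (q ^ (1 + m) * w d) / qPochInf q (q ^ m * (p d * w d)))) :=
  stmt7_general q hq1 L k w p hwk hwgen hpw ζ hζ
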